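/- An ℓ-group G is a Martínez ℓ-group if and only if distinct compact open subsets of Spec(G) (in the hull-kernel topology) have distinct closures in the hull-kernel topology. -/

import Mathlib

/-!
Common definitions for lattice-ordered groups (ℓ-groups), written additively.
An ℓ-group is modeled as `[Lattice G] [AddGroup G]` together with the two
`CovariantClass` hypotheses expressing that translation is order-preserving.
-/

/-- The absolute value in an ℓ-group: `|g| = (g ⊔ 0) + ((-g) ⊔ 0)`. -/
def labs {G : Type*} [Lattice G] [AddGroup G] (g : G) : G := (g ⊔ 0) + (-g ⊔ 0)

/-- A convex ℓ-subgroup of `G`: a subgroup which is a sublattice and is convex. -/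
def IsConvexLSubgroup {G : Type*} [Lattice G] [AddGroup G] (H : Set G) : Prop :=
  (0 : G) ∈ H ∧ (∀ a ∈ H, -a ∈ H) ∧ (∀ a ∈ H, ∀ b ∈ H, a + b ∈ H) ∧
  (∀ a ∈ H, ∀ b ∈ H, a ⊔ b ∈ H) ∧ (∀ a ∈ H, ∀ b ∈ H, a ⊓ b ∈ H) ∧
  (∀ a ∈ H, ∀ b ∈ H, ∀ g : G, a ≤ g → g ≤ b → g ∈ H)

/-- The polar `g^⊥ = {h : |h| ⊓ |g| = 0}`. -/
def polar {G : Type*} [Lattice G] [AddGroup G] (g : G) : Set G :=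
  {h : G | labs h ⊓ labs g = 0}

/-- The double polar `g^{⊥⊥} = (g^⊥)^⊥ = {h : ∀ k ∈ g^⊥, |h| ⊓ |k| = 0}`. -/
def biPolar {G : Type*} [Lattice G] [AddGroup G] (g : G) : Set G :=
  {h : G | ∀ k ∈ polar g, labs h ⊓ labs k = 0}

/-- A d-subgroup: a convex ℓ-subgroup containing the double polar of each of its elements. -/
def IsDSubgroup {G : Type*} [Lattice G] [AddGroup G] (H : Set G) : Prop :=
  IsConvexLSubgroup H ∧ ∀ h ∈ H, biPolar h ⊆ H

/-- A Martínez ℓ-group: every convex ℓ-subgroup is a d-subgroup. -/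
def Martinez (G : Type*) [Lattice G] [AddGroup G] : Prop :=
  ∀ H : Set G, IsConvexLSubgroup H → IsDSubgroup H

/-- `G(g)`, the smallest convex ℓ-subgroup of `G` containing `g`. -/
def principalCLS {G : Type*} [Lattice G] [AddGroup G] (g : G) : Set G :=
  {x : G | ∀ H : Set G, IsConvexLSubgroup H → g ∈ H → x ∈ H}

/-- A prime subgroup: a proper convex ℓ-subgroup `P` with `a ⊓ b ∈ P → a ∈ P ∨ b ∈ P`. -/
def IsPrimeSubgroup {G : Type*} [Lattice G] [AddGroup G] (P : Set G) : Prop :=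
  IsConvexLSubgroup P ∧ P ≠ Set.univ ∧ ∀ a b : G, a ⊓ b ∈ P → a ∈ P ∨ b ∈ P

/-- A minimal prime subgroup. -/
def IsMinimalPrimeLSubgroup {G : Type*} [Lattice G] [AddGroup G] (P : Set G) : Prop :=
  IsPrimeSubgroup P ∧ ∀ Q : Set G, IsPrimeSubgroup Q → Q ⊆ P → Q = P

/-- `Spec(G)`, the set of prime subgroups of `G`, as a type. -/
abbrev SpecType (G : Type*) [Lattice G] [AddGroup G] : Type _ :=
  {P : Set G // IsPrimeSubgroup P}

/-- `U(g) = {P ∈ Spec(G) : g ∉ P}`. -/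
def Uset {G : Type*} [Lattice G] [AddGroup G] (g : G) : Set (SpecType G) :=
  {P : SpecType G | g ∉ P.1}

/-- `V(g) = {P ∈ Spec(G) : g ∈ P}`. -/
def Vset {G : Type*} [Lattice G] [AddGroup G] (g : G) : Set (SpecType G) :=
  {P : SpecType G | g ∈ P.1}

/-- The patch topology on `Spec(G)`, generated by all the sets `U(g)` and `V(g)`. -/
def patchTop (G : Type*) [Lattice G] [AddGroup G] : TopologicalSpace (SpecType G) :=
  TopologicalSpace.generateFrom
    ({S : Set (SpecType G) | ∃ g : G, S = Uset g} ∪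
      {S : Set (SpecType G) | ∃ g : G, S = Vset g})

/-- The hull-kernel topology on `Spec(G)`, with base `{U(g) : g ∈ G}`. -/
def hkTop (G : Type*) [Lattice G] [AddGroup G] : TopologicalSpace (SpecType G) :=
  TopologicalSpace.generateFrom {S : Set (SpecType G) | ∃ g : G, S = Uset g}

set_option linter.unusedSectionVars false
set_option linter.unnecessarySimpa false
set_option maxHeartbeats 1000000

section Alg
variable {G : Type*} [Lattice G] [AddGroup G]
    [CovariantClass G G (· + ·) (· ≤ ·)]
    [CovariantClass G G (Function.swap (· + ·)) (· ≤ ·)]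

/-- `a ⊔ b = a + ((-a ⊔ -b)) + b`, the noncommutative join identity. -/
lemma sup_identity (a b : G) : a ⊔ b = a + (-(a ⊓ b)) + b := by
  rw [neg_inf, add_sup, sup_add]
  simp [sup_comm]

lemma sum_eq_sup_of_inf_zero {a b : G} (h : a ⊓ b = 0) : a + b = a ⊔ b := by
  rw [sup_identity a b, h, neg_zero, add_zero]

lemma negPart_eq (g : G) : (-g ⊔ 0) = (g ⊔ 0) - g := by
  rw [sub_eq_add_neg, sup_add]; simp [sup_comm]

lemma posPart_inf_negPart (g : G) : (g ⊔ 0) ⊓ (-g ⊔ 0) = 0 := by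
  rw [negPart_eq, sub_eq_add_neg]
  have : (g ⊔ 0) ⊓ ((g ⊔ 0) + -g) = ((g ⊔ 0) + 0) ⊓ ((g ⊔ 0) + -g) := by rw [add_zero]
  rw [this, ← add_inf]
  have : (0 : G) ⊓ (-g) = -(0 ⊔ g) := by rw [neg_sup, neg_zero]
  rw [this, sup_comm, add_neg_cancel]

lemma labs_eq_sup (g : G) : labs g = (g ⊔ 0) ⊔ (-g ⊔ 0) := by
  rw [labs, sum_eq_sup_of_inf_zero (posPart_inf_negPart g)]

lemma labs_nonneg (g : G) : 0 ≤ labs g := by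
  rw [labs_eq_sup]; exact le_trans le_sup_right le_sup_left

lemma le_labs (g : G) : g ≤ labs g := by
  rw [labs_eq_sup]; exact le_trans le_sup_left le_sup_left

lemma neg_le_labs (g : G) : -g ≤ labs g := by
  rw [labs_eq_sup]; exact le_trans le_sup_left le_sup_right

lemma labs_le {g c : G} (h1 : g ≤ c) (h2 : -g ≤ c) (h0 : 0 ≤ c) : labs g ≤ c := by
  rw [labs_eq_sup]; exact sup_le (sup_le h1 h0) (sup_le h2 h0)

lemma labs_neg (g : G) : labs (-g) = labs g := by
  rw [labs_eq_sup, labs_eq_sup, neg_neg, sup_comm]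

lemma labs_of_nonneg {g : G} (h : 0 ≤ g) : labs g = g := by
  rw [labs_eq_sup, sup_eq_left.2 h, sup_eq_right.2 (neg_nonpos.2 h), sup_eq_left.2 h]

lemma labs_zero : labs (0 : G) = 0 := labs_of_nonneg le_rfl

lemma eq_zero_of_labs_eq_zero {g : G} (h : labs g = 0) : g = 0 := by
  have h1 : g ≤ 0 := le_trans (le_labs g) h.le
  have h2 : -g ≤ 0 := le_trans (neg_le_labs g) h.le
  exact le_antisymm h1 (neg_nonpos.1 h2)

lemma decomp (g : G) : -(-g ⊔ 0) + (g ⊔ 0) = g := by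
  rw [negPart_eq, neg_sub, sub_add_cancel]

lemma labs_mem_iff {H : Set G} (hH : IsConvexLSubgroup H) {g : G} :
    labs g ∈ H ↔ g ∈ H := by
  obtain ⟨h0, hneg, hadd, hsup, hinf, hconv⟩ := hH
  constructor
  · intro hl
    have hp : (g ⊔ 0) ∈ H := by
      refine hconv 0 h0 (labs g) hl _ le_sup_right ?_
      rw [labs_eq_sup]; exact le_sup_left
    have hn : (-g ⊔ 0) ∈ H := by
      refine hconv 0 h0 (labs g) hl _ le_sup_right ?_
      rw [labs_eq_sup]; exact le_sup_right
    have := hadd _ (hneg _ hn) _ hp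
    rwa [decomp] at this
  · intro hg
    exact hadd _ (hsup _ hg _ h0) _ (hsup _ (hneg _ hg) _ h0)

lemma mem_of_nonneg_le {H : Set G} (hH : IsConvexLSubgroup H) {g b : G}
    (h0 : 0 ≤ g) (hle : g ≤ b) (hb : b ∈ H) : g ∈ H :=
  hH.2.2.2.2.2 0 hH.1 b hb g h0 hle

/-- Riesz-type inequality. -/
lemma inf_add_le_riesz {a b c : G} (ha : 0 ≤ a) (hb : 0 ≤ b) (hc : 0 ≤ c) :
    a ⊓ (b + c) ≤ (a ⊓ b) + (a ⊓ c) := by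
  rw [add_inf a c (a ⊓ b), inf_add a b a, inf_add a b c]
  refine le_inf (le_inf ?_ ?_) (le_inf ?_ ?_)
  · exact le_trans inf_le_left (le_add_of_nonneg_left ha)
  · exact le_trans inf_le_left (le_add_of_nonneg_left hb)
  · exact le_trans inf_le_left (le_add_of_nonneg_right hc)
  · exact inf_le_right

end Alg

section Gen
variable {G : Type*} [Lattice G] [AddGroup G]
    [CovariantClass G G (· + ·) (· ≤ ·)]
    [CovariantClass G G (Function.swap (· + ·)) (· ≤ ·)]

/-- sum of absolute values over a list -/
def sumAbs (l : List G) : G := (l.map labs).sum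

lemma sumAbs_nil : sumAbs ([] : List G) = 0 := rfl

lemma sumAbs_cons (a : G) (l : List G) : sumAbs (a :: l) = labs a + sumAbs l := by
  simp [sumAbs]

lemma sumAbs_append (l l' : List G) : sumAbs (l ++ l') = sumAbs l + sumAbs l' := by
  simp [sumAbs]

lemma sumAbs_nonneg (l : List G) : 0 ≤ sumAbs l := by
  induction l with
  | nil => simp [sumAbs_nil]
  | cons a l ih => rw [sumAbs_cons]; exact add_nonneg (labs_nonneg a) ih

lemma sumAbs_mem {H : Set G} (hH : IsConvexLSubgroup H) {l : List G}
    (hl : ∀ a ∈ l, a ∈ H) : sumAbs l ∈ H := by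
  induction l with
  | nil => exact hH.1
  | cons a l ih =>
    rw [sumAbs_cons]
    exact hH.2.2.1 _ ((labs_mem_iff hH).2 (hl a (by simp))) _
      (ih fun a ha => hl a (by simp [ha]))

/-- the convex ℓ-subgroup generated by a set -/
def genCLS (F : Set G) : Set G :=
  {x : G | ∃ l : List G, (∀ a ∈ l, a ∈ F) ∧ labs x ≤ sumAbs l}

lemma subset_genCLS (F : Set G) : F ⊆ genCLS F := by
  intro a ha
  exact ⟨[a], by simpa using ha, by simp [sumAbs_cons, sumAbs_nil]⟩

lemma genCLS_isConvex (F : Set G) : IsConvexLSubgroup (genCLS F) := by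
  have key : ∀ x y : G, ∀ s t : G, labs x ≤ s → labs y ≤ t → labs (x + y) ≤ s + (t + s) := by
    intro x y s t hx hy
    have hs : 0 ≤ s := le_trans (labs_nonneg x) hx
    have ht : 0 ≤ t := le_trans (labs_nonneg y) hy
    refine labs_le ?_ ?_ (by positivity)
    · calc x + y ≤ s + t := add_le_add (le_trans (le_labs x) hx) (le_trans (le_labs y) hy)
        _ ≤ s + (t + s) := by rw [← add_assoc]; exact le_add_of_nonneg_right hs
    · rw [neg_add_rev]
      calc -y + -x ≤ t + s := add_le_add (le_trans (neg_le_labs y) hy) (le_trans (neg_le_labs x) hx)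
        _ ≤ s + (t + s) := le_add_of_nonneg_left hs
  refine ⟨⟨[], by simp, by simp [sumAbs_nil, labs_zero]⟩, ?_, ?_, ?_, ?_, ?_⟩
  · rintro a ⟨l, hl, hle⟩
    exact ⟨l, hl, by rwa [labs_neg]⟩
  · rintro a ⟨l, hl, hle⟩ b ⟨l', hl', hle'⟩
    refine ⟨l ++ (l' ++ l), ?_, ?_⟩
    · intro x hx; simp at hx; rcases hx with h|h|h
      exacts [hl x h, hl' x h, hl x h]
    · rw [sumAbs_append, sumAbs_append]
      exact key a b _ _ hle hle'
  · rintro a ⟨l, hl, hle⟩ b ⟨l', hl', hle'⟩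
    refine ⟨l ++ l', fun x hx => by simp at hx; exact hx.elim (hl x) (hl' x), ?_⟩
    rw [sumAbs_append]
    have h1 : a ⊔ b ≤ sumAbs l + sumAbs l' := by
      refine sup_le ?_ ?_
      · exact le_trans (le_trans (le_labs a) hle) (le_add_of_nonneg_right (sumAbs_nonneg l'))
      · exact le_trans (le_trans (le_labs b) hle') (le_add_of_nonneg_left (sumAbs_nonneg l))
    have h2 : -(a ⊔ b) ≤ sumAbs l + sumAbs l' := by
      rw [neg_sup]
      exact le_trans inf_le_left (le_trans (le_trans (neg_le_labs a) hle)
        (le_add_of_nonneg_right (sumAbs_nonneg l')))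
    exact labs_le h1 h2 (add_nonneg (sumAbs_nonneg l) (sumAbs_nonneg l'))
  · rintro a ⟨l, hl, hle⟩ b ⟨l', hl', hle'⟩
    refine ⟨l ++ l', fun x hx => by simp at hx; exact hx.elim (hl x) (hl' x), ?_⟩
    rw [sumAbs_append]
    have h1 : a ⊓ b ≤ sumAbs l + sumAbs l' := by
      exact le_trans inf_le_left (le_trans (le_trans (le_labs a) hle)
        (le_add_of_nonneg_right (sumAbs_nonneg l')))
    have h2 : -(a ⊓ b) ≤ sumAbs l + sumAbs l' := by
      rw [neg_inf]
      refine sup_le ?_ ?_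
      · exact le_trans (le_trans (neg_le_labs a) hle) (le_add_of_nonneg_right (sumAbs_nonneg l'))
      · exact le_trans (le_trans (neg_le_labs b) hle') (le_add_of_nonneg_left (sumAbs_nonneg l))
    exact labs_le h1 h2 (add_nonneg (sumAbs_nonneg l) (sumAbs_nonneg l'))
  · rintro a ⟨l, hl, hle⟩ b ⟨l', hl', hle'⟩ g hag hgb
    refine ⟨l ++ l', fun x hx => by simp at hx; exact hx.elim (hl x) (hl' x), ?_⟩
    rw [sumAbs_append]
    have h1 : g ≤ sumAbs l + sumAbs l' :=
      le_trans hgb (le_trans (le_trans (le_labs b) hle') (le_add_of_nonneg_left (sumAbs_nonneg l)))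
    have h2 : -g ≤ sumAbs l + sumAbs l' := by
      have : -g ≤ -a := neg_le_neg_iff.2 hag
      exact le_trans this (le_trans (le_trans (neg_le_labs a) hle)
        (le_add_of_nonneg_right (sumAbs_nonneg l')))
    exact labs_le h1 h2 (add_nonneg (sumAbs_nonneg l) (sumAbs_nonneg l'))

end Gen

section Prime
variable {G : Type*} [Lattice G] [AddGroup G]
    [CovariantClass G G (· + ·) (· ≤ ·)]
    [CovariantClass G G (Function.swap (· + ·)) (· ≤ ·)]

lemma listSum_mem {H : Set G} (hH : IsConvexLSubgroup H) {l : List G}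
    (hl : ∀ x ∈ l, x ∈ H) : l.sum ∈ H := by
  induction l with
  | nil => exact hH.1
  | cons a l ih =>
    rw [List.sum_cons]
    exact hH.2.2.1 _ (hl a (by simp)) _ (ih fun x hx => hl x (by simp [hx]))

lemma inf_sumAbs_le {a : G} (ha : 0 ≤ a) (l : List G) :
    a ⊓ sumAbs l ≤ (l.map (fun x => a ⊓ labs x)).sum := by
  induction l with
  | nil => simpa [sumAbs_nil] using inf_le_right
  | cons x l ih =>
    rw [sumAbs_cons, List.map_cons, List.sum_cons]
    calc a ⊓ (labs x + sumAbs l) ≤ (a ⊓ labs x) + (a ⊓ sumAbs l) :=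
          inf_add_le_riesz ha (labs_nonneg x) (sumAbs_nonneg l)
      _ ≤ _ := add_le_add le_rfl ih

/-- sUnion of a nonempty chain of convex ℓ-subgroups is one. -/
lemma chain_union_convex {c : Set (Set G)} (hc : IsChain (· ⊆ ·) c)
    (hne : c.Nonempty) (hmem : ∀ K ∈ c, IsConvexLSubgroup K) :
    IsConvexLSubgroup (⋃₀ c) := by
  obtain ⟨K0, hK0⟩ := hne
  have pair : ∀ a ∈ ⋃₀ c, ∀ b ∈ ⋃₀ c, ∃ K ∈ c, a ∈ K ∧ b ∈ K := by
    rintro a ⟨K1, hK1, ha⟩ b ⟨K2, hK2, hb⟩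
    rcases hc.total hK1 hK2 with h | h
    · exact ⟨K2, hK2, h ha, hb⟩
    · exact ⟨K1, hK1, ha, h hb⟩
  refine ⟨⟨K0, hK0, (hmem K0 hK0).1⟩, ?_, ?_, ?_, ?_, ?_⟩
  · rintro a ⟨K, hK, ha⟩; exact ⟨K, hK, (hmem K hK).2.1 a ha⟩
  · intro a ha b hb
    obtain ⟨K, hK, ha', hb'⟩ := pair a ha b hb
    exact ⟨K, hK, (hmem K hK).2.2.1 a ha' b hb'⟩
  · intro a ha b hb
    obtain ⟨K, hK, ha', hb'⟩ := pair a ha b hb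
    exact ⟨K, hK, (hmem K hK).2.2.2.1 a ha' b hb'⟩
  · intro a ha b hb
    obtain ⟨K, hK, ha', hb'⟩ := pair a ha b hb
    exact ⟨K, hK, (hmem K hK).2.2.2.2.1 a ha' b hb'⟩
  · intro a ha b hb g hag hgb
    obtain ⟨K, hK, ha', hb'⟩ := pair a ha b hb
    exact ⟨K, hK, (hmem K hK).2.2.2.2.2 a ha' b hb' g hag hgb⟩

/-- Key existence result: a convex ℓ-subgroup avoiding `g` extends to a prime avoiding `g`. -/
lemma exists_prime_subgroup {H : Set G} (hH : IsConvexLSubgroup H) {g : G} (hg : g ∉ H) :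
    ∃ P : Set G, IsPrimeSubgroup P ∧ H ⊆ P ∧ g ∉ P := by
  set S : Set (Set G) := {K | IsConvexLSubgroup K ∧ H ⊆ K ∧ g ∉ K} with hS
  obtain ⟨M, hMmax⟩ := zorn_subset_nonempty S
    (fun c hcS hchain hcne => ⟨⋃₀ c,
      ⟨chain_union_convex hchain hcne (fun K hK => (hcS hK).1),
       hcne.elim (fun K0 hK0 => ((hcS hK0).2.1).trans (Set.subset_sUnion_of_mem hK0)),
       by rintro ⟨K, hK, hgK⟩; exact (hcS hK).2.2 hgK⟩,
      fun s hs => Set.subset_sUnion_of_mem hs⟩)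
    H ⟨hH, subset_rfl, hg⟩
  obtain ⟨hHM, hM⟩ := hMmax
  have hMS : M ∈ S := hM.prop
  obtain ⟨hMconv, hHMsub, hgM⟩ := hMS
  -- M is prime
  refine ⟨M, ⟨hMconv, ?_, ?_⟩, hHMsub, hgM⟩
  · intro h; exact hgM (h ▸ Set.mem_univ g)
  · intro a b hab
    by_contra hcon
    push_neg at hcon
    obtain ⟨haM, hbM⟩ := hcon
    set c := a ⊓ b with hc
    set a' := a - c with ha'
    set b' := b - c with hb'
    have hdisj : a' ⊓ b' = 0 := by
      rw [ha', hb', sub_eq_add_neg, sub_eq_add_neg, ← inf_add, ← hc, add_neg_cancel]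
    have ha'0 : 0 ≤ a' := hdisj ▸ inf_le_left
    have hb'0 : 0 ≤ b' := hdisj ▸ inf_le_right
    have ha'M : a' ∉ M := fun h => haM (by
      have := hMconv.2.2.1 _ h _ hab
      rwa [ha', sub_add_cancel] at this)
    have hb'M : b' ∉ M := fun h => hbM (by
      have := hMconv.2.2.1 _ h _ hab
      rwa [hb', sub_add_cancel] at this)
    -- g belongs to both extensions
    have hext : ∀ x : G, x ∉ M → g ∈ genCLS (M ∪ {x}) := by
      intro x hxM
      by_contra hgD
      have hDS : genCLS (M ∪ {x}) ∈ S :=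
        ⟨genCLS_isConvex _, hHMsub.trans ((Set.subset_union_left).trans (subset_genCLS _)), hgD⟩
      have : genCLS (M ∪ {x}) ⊆ M :=
        hM.2 hDS ((Set.subset_union_left).trans (subset_genCLS _))
      exact hxM (this (subset_genCLS _ (by simp)))
    obtain ⟨l, hl, hle⟩ := hext a' ha'M
    obtain ⟨l', hl', hle'⟩ := hext b' hb'M
    set u := sumAbs l with hu
    set v := sumAbs l' with hv
    have hu0 : 0 ≤ u := sumAbs_nonneg l
    have hv0 : 0 ≤ v := sumAbs_nonneg l'
    -- each u ⊓ labs y for y ∈ l' lies in M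
    have hterm : ∀ y ∈ l', u ⊓ labs y ∈ M := by
      intro y hy
      rcases hl' y hy with hyM | hyb
      · exact mem_of_nonneg_le hMconv (le_inf hu0 (labs_nonneg y)) inf_le_right
          ((labs_mem_iff hMconv).2 hyM)
      · -- y = b'
        have hyb' : y = b' := hyb
        subst hyb'
        rw [labs_of_nonneg hb'0]
        have h1 : b' ⊓ u ≤ (l.map (fun x => b' ⊓ labs x)).sum := inf_sumAbs_le hb'0 l
        have h2 : (l.map (fun x => b' ⊓ labs x)).sum ∈ M := by
          refine listSum_mem hMconv ?_
          intro z hz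
          simp only [List.mem_map] at hz
          obtain ⟨x, hxl, rfl⟩ := hz
          rcases hl x hxl with hxM | hxa
          · exact mem_of_nonneg_le hMconv (le_inf hb'0 (labs_nonneg x)) inf_le_right
              ((labs_mem_iff hMconv).2 hxM)
          · have hxa' : x = a' := hxa
            subst hxa'
            rw [labs_of_nonneg ha'0, inf_comm, hdisj]
            exact hMconv.1
        have := mem_of_nonneg_le hMconv (le_inf hb'0 hu0) h1 h2
        rwa [inf_comm]
    have huv : u ⊓ v ∈ M := by
      have h1 : u ⊓ v ≤ (l'.map (fun y => u ⊓ labs y)).sum := inf_sumAbs_le hu0 l'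
      have h2 : (l'.map (fun y => u ⊓ labs y)).sum ∈ M := by
        refine listSum_mem hMconv ?_
        intro z hz
        simp only [List.mem_map] at hz
        obtain ⟨y, hyl, rfl⟩ := hz
        exact hterm y hyl
      exact mem_of_nonneg_le hMconv (le_inf hu0 hv0) h1 h2
    have : labs g ∈ M :=
      mem_of_nonneg_le hMconv (labs_nonneg g) (le_inf hle hle') huv
    exact hgM ((labs_mem_iff hMconv).1 this)

/-- a convex ℓ-subgroup is the intersection of the primes containing it -/
lemma mem_of_forall_prime {H : Set G} (hH : IsConvexLSubgroup H) {x : G}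
    (h : ∀ P : Set G, IsPrimeSubgroup P → H ⊆ P → x ∈ P) : x ∈ H := by
  by_contra hx
  obtain ⟨P, hP, hHP, hxP⟩ := exists_prime_subgroup hH hx
  exact hxP (h P hP hHP)

lemma eq_zero_of_forall_prime {x : G}
    (h : ∀ P : Set G, IsPrimeSubgroup P → x ∈ P) : x = 0 := by
  have hz : IsConvexLSubgroup ({0} : Set G) := by
    refine ⟨rfl, ?_, ?_, ?_, ?_, ?_⟩
    · rintro a rfl; simp
    · rintro a rfl b rfl; simp
    · rintro a rfl b rfl; simp
    · rintro a rfl b rfl; simp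
    · rintro a rfl b rfl g h1 h2
      exact le_antisymm h2 h1
  have := mem_of_forall_prime hz (x := x) (fun P hP _ => h P hP)
  simpa using this

end Prime

section Top
variable {G : Type*} [Lattice G] [AddGroup G]
    [CovariantClass G G (· + ·) (· ≤ ·)]
    [CovariantClass G G (Function.swap (· + ·)) (· ≤ ·)]

lemma genCLS_polar (g : G) : genCLS (polar g) = polar g := by
  apply subset_antisymm _ (subset_genCLS _)
  rintro z ⟨l, hl, hle⟩
  have h1 : labs z ⊓ labs g ≤ labs g ⊓ sumAbs l := by
    rw [inf_comm]
    exact inf_le_inf_left _ hle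
  have h2 : labs g ⊓ sumAbs l ≤ (l.map (fun x => labs g ⊓ labs x)).sum :=
    inf_sumAbs_le (labs_nonneg g) l
  have h3 : (l.map (fun x => labs g ⊓ labs x)).sum = 0 := by
    rw [List.sum_eq_zero]
    intro x hx
    simp only [List.mem_map] at hx
    obtain ⟨a, hal, rfl⟩ := hx
    rw [inf_comm]
    exact hl a hal
  have h4 : labs z ⊓ labs g ≤ 0 := h1.trans (h3 ▸ h2)
  exact le_antisymm h4 (le_inf (labs_nonneg z) (labs_nonneg g))

lemma polar_isConvex (g : G) : IsConvexLSubgroup (polar g) := by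
  rw [← genCLS_polar]; exact genCLS_isConvex _

lemma principalCLS_isConvex (g : G) : IsConvexLSubgroup (principalCLS g) := by
  refine ⟨fun H hH _ => hH.1, ?_, ?_, ?_, ?_, ?_⟩
  · intro a ha H hH hgH; exact hH.2.1 a (ha H hH hgH)
  · intro a ha b hb H hH hgH; exact hH.2.2.1 a (ha H hH hgH) b (hb H hH hgH)
  · intro a ha b hb H hH hgH; exact hH.2.2.2.1 a (ha H hH hgH) b (hb H hH hgH)
  · intro a ha b hb H hH hgH; exact hH.2.2.2.2.1 a (ha H hH hgH) b (hb H hH hgH)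
  · intro a ha b hb x hax hxb H hH hgH
    exact hH.2.2.2.2.2 a (ha H hH hgH) b (hb H hH hgH) x hax hxb

lemma mem_principalCLS_self (g : G) : g ∈ principalCLS g := fun _ _ h => h

lemma principalCLS_subset {H : Set G} (hH : IsConvexLSubgroup H) {g : G} (hg : g ∈ H) :
    principalCLS g ⊆ H := fun _ hx => hx H hH hg

-- prime membership helpers
lemma prime_inf_mem_left {P : SpecType G} {a b : G} (ha : a ∈ P.1) :
    labs a ⊓ labs b ∈ P.1 :=
  mem_of_nonneg_le P.2.1 (le_inf (labs_nonneg a) (labs_nonneg b)) inf_le_left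
    ((labs_mem_iff P.2.1).2 ha)

lemma prime_inf_mem_right {P : SpecType G} {a b : G} (hb : b ∈ P.1) :
    labs a ⊓ labs b ∈ P.1 :=
  mem_of_nonneg_le P.2.1 (le_inf (labs_nonneg a) (labs_nonneg b)) inf_le_right
    ((labs_mem_iff P.2.1).2 hb)

lemma prime_inf_cases {P : SpecType G} {a b : G} (h : labs a ⊓ labs b ∈ P.1) :
    a ∈ P.1 ∨ b ∈ P.1 := by
  rcases P.2.2.2 _ _ h with h' | h'
  · exact Or.inl ((labs_mem_iff P.2.1).1 h')
  · exact Or.inr ((labs_mem_iff P.2.1).1 h')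

lemma Uset_inf (g h : G) : Uset g ∩ Uset h = Uset (labs g ⊓ labs h) := by
  ext P
  simp only [Uset, Set.mem_inter_iff, Set.mem_setOf_eq]
  constructor
  · rintro ⟨hg, hh⟩ hmem
    rcases prime_inf_cases hmem with h' | h'
    exacts [hg h', hh h']
  · intro hmem
    exact ⟨fun h' => hmem (prime_inf_mem_left h'), fun h' => hmem (prime_inf_mem_right h')⟩

lemma Uset_add (g h : G) : Uset (labs g + labs h) = Uset g ∪ Uset h := by
  ext P
  simp only [Uset, Set.mem_union, Set.mem_setOf_eq]
  constructor
  · intro hmem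
    by_contra hc
    push_neg at hc
    exact hmem (P.2.1.2.2.1 _ ((labs_mem_iff P.2.1).2 hc.1) _
      ((labs_mem_iff P.2.1).2 hc.2))
  · rintro (hg | hh) hmem
    · exact hg ((labs_mem_iff P.2.1).1 (mem_of_nonneg_le P.2.1 (labs_nonneg g)
        (le_add_of_nonneg_right (labs_nonneg h)) hmem))
    · exact hh ((labs_mem_iff P.2.1).1 (mem_of_nonneg_le P.2.1 (labs_nonneg h)
        (le_add_of_nonneg_left (labs_nonneg g)) hmem))

lemma Uset_zero : Uset (0 : G) = ∅ := by
  ext P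
  exact iff_of_false (fun h => h P.2.1.1) id

lemma hk_basis : @TopologicalSpace.IsTopologicalBasis (SpecType G) (hkTop G)
    {S : Set (SpecType G) | ∃ g : G, S = Uset g} := by
  letI := hkTop G
  refine ⟨?_, ?_, rfl⟩
  · rintro t₁ ⟨g, rfl⟩ t₂ ⟨h, rfl⟩ x hx
    exact ⟨Uset (labs g ⊓ labs h), ⟨_, rfl⟩, (Uset_inf g h) ▸ hx, (Uset_inf g h).ge⟩
  · apply Set.eq_univ_of_forall
    intro P
    obtain ⟨g, hg⟩ := Set.ne_univ_iff_exists_notMem _ |>.1 P.2.2.1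
    exact ⟨Uset g, ⟨g, rfl⟩, hg⟩

lemma isOpen_Uset (g : G) : @IsOpen _ (hkTop G) (Uset g) :=
  TopologicalSpace.isOpen_generateFrom_of_mem ⟨g, rfl⟩

lemma isCompact_Uset (g : G) : @IsCompact _ (hkTop G) (Uset g) := by
  letI := hkTop G
  classical
  apply isCompact_of_finite_subcover
  intro ι U hUopen hcover
  have key : ∀ P : SpecType G, P ∈ Uset g → ∃ x : G, ∃ j : ι, P ∈ Uset x ∧ Uset x ⊆ U j := by
    intro P hP
    obtain ⟨j, hj⟩ := Set.mem_iUnion.1 (hcover hP)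
    obtain ⟨b, ⟨x, rfl⟩, hPb, hbU⟩ := hk_basis.exists_subset_of_mem_open hj (hUopen j)
    exact ⟨x, j, hPb, hbU⟩
  choose x j hx hsub using key
  set F : Set G := {y | ∃ P : SpecType G, ∃ hP : P ∈ Uset g, y = x P hP} with hF
  have hgF : g ∈ genCLS F := by
    apply mem_of_forall_prime (genCLS_isConvex F)
    intro Q hQ hsubQ
    by_contra hgQ
    have hmem : (⟨Q, hQ⟩ : SpecType G) ∈ Uset g := hgQ
    have : x ⟨Q, hQ⟩ hmem ∈ Q := hsubQ (subset_genCLS _ ⟨⟨Q, hQ⟩, hmem, rfl⟩)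
    exact hx ⟨Q, hQ⟩ hmem this
  obtain ⟨l, hl, hle⟩ := hgF
  have hchoose : ∀ a ∈ l, ∃ j' : ι, Uset a ⊆ U j' := by
    intro a ha
    obtain ⟨P, hP, rfl⟩ := hl a ha
    exact ⟨j P hP, hsub P hP⟩
  choose j' hj' using hchoose
  refine ⟨(l.attach.map (fun a => j' a.1 a.2)).toFinset, ?_⟩
  intro Q hQ
  have : ∃ a ∈ l, a ∉ Q.1 := by
    by_contra hc
    push_neg at hc
    have hsum : sumAbs l ∈ Q.1 := sumAbs_mem Q.2.1 hc
    have : labs g ∈ Q.1 := mem_of_nonneg_le Q.2.1 (labs_nonneg g) hle hsum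
    exact hQ ((labs_mem_iff Q.2.1).1 this)
  obtain ⟨a, hal, haQ⟩ := this
  refine Set.mem_iUnion.2 ⟨j' a hal, Set.mem_iUnion.2 ⟨?_, hj' a hal haQ⟩⟩
  simp only [List.mem_toFinset, List.mem_map]
  exact ⟨⟨a, hal⟩, List.mem_attach _ _, rfl⟩

lemma compact_open_eq_Uset {S : Set (SpecType G)} (hc : @IsCompact _ (hkTop G) S)
    (ho : @IsOpen _ (hkTop G) S) : ∃ g : G, S = Uset g := by
  letI := hkTop G
  obtain ⟨S', hS'B, rfl⟩ := hk_basis.open_eq_sUnion ho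
  have hcover : ⋃₀ S' ⊆ ⋃ b : S', (b : Set (SpecType G)) := by
    rintro P ⟨b, hb, hPb⟩
    exact Set.mem_iUnion.2 ⟨⟨b, hb⟩, hPb⟩
  obtain ⟨t, ht⟩ := hc.elim_finite_subcover (fun b : S' => (b : Set (SpecType G)))
    (fun b => by
      obtain ⟨g, hg⟩ := hS'B b.2
      show IsOpen (b : Set (SpecType G))
      rw [hg]; exact isOpen_Uset g) hcover
  have heq : ⋃₀ S' = ⋃ b ∈ t, (b : Set (SpecType G)) := by
    apply subset_antisymm
    · intro P hP
      exact ht hP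
    · intro P hP
      simp only [Set.mem_iUnion] at hP
      obtain ⟨b, _, hPb⟩ := hP
      exact ⟨b, b.2, hPb⟩
  rw [heq]
  clear heq ht hcover hc ho
  classical
  induction t using Finset.induction with
  | empty => exact ⟨0, by simp [Uset_zero]⟩
  | @insert b t hnot ih =>
    obtain ⟨y, hy⟩ := ih
    obtain ⟨x, hx⟩ := hS'B b.2
    refine ⟨labs x + labs y, ?_⟩
    rw [Finset.set_biUnion_insert, hx, hy, ← Uset_add]

lemma hk_closure (g : G) : @closure _ (hkTop G) (Uset g) = {P : SpecType G | polar g ⊆ P.1} := by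
  letI := hkTop G
  ext P
  rw [hk_basis.mem_closure_iff]
  constructor
  · intro hcl k hk
    by_contra hkP
    obtain ⟨Q, hQk, hQg⟩ := hcl (Uset k) ⟨k, rfl⟩ hkP
    have h0 : labs k ⊓ labs g ∈ Q.1 := hk ▸ Q.2.1.1
    rcases prime_inf_cases h0 with h' | h'
    exacts [hQk h', hQg h']
  · rintro hsub o ⟨h, rfl⟩ hPo
    have hnp : h ∉ polar g := fun hmem => hPo (hsub hmem)
    have : ∃ Q : Set G, IsPrimeSubgroup Q ∧ labs h ⊓ labs g ∉ Q := by
      by_contra hall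
      push_neg at hall
      exact hnp (eq_zero_of_forall_prime hall)
    obtain ⟨Q, hQ, hmem⟩ := this
    refine ⟨⟨Q, hQ⟩, ?_, ?_⟩
    · exact fun h' => hmem (prime_inf_mem_left h')
    · exact fun h' => hmem (prime_inf_mem_right h')

end Top
/-- `G` is Martínez iff distinct compact open subsets of `Spec(G)`
(hull-kernel topology) have distinct hull-kernel closures. -/
theorem stmt_5 {G : Type*} [Lattice G] [AddGroup G]
    [CovariantClass G G (· + ·) (· ≤ ·)]
    [CovariantClass G G (Function.swap (· + ·)) (· ≤ ·)] :
    Martinez G ↔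
      ∀ S T : Set (SpecType G),
        @IsCompact _ (hkTop G) S → @IsOpen _ (hkTop G) S →
        @IsCompact _ (hkTop G) T → @IsOpen _ (hkTop G) T →
        @closure _ (hkTop G) S = @closure _ (hkTop G) T → S = T := by
  have hmem_bi : ∀ x : G, x ∈ biPolar x := by
    intro x k hk
    rw [inf_comm]; exact hk
  constructor
  · intro hM S T hSc hSo hTc hTo hcl
    obtain ⟨g, rfl⟩ := compact_open_eq_Uset hSc hSo
    obtain ⟨h, rfl⟩ := compact_open_eq_Uset hTc hTo
    rw [hk_closure, hk_closure] at hcl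
    have hp : ∀ g' h' : G,
        ({P : SpecType G | polar g' ⊆ P.1} = {P : SpecType G | polar h' ⊆ P.1}) →
        polar h' ⊆ polar g' := by
      intro g' h' hcl' k hk
      by_contra hkP
      obtain ⟨P, hP, hsubP, hkP'⟩ := exists_prime_subgroup (polar_isConvex g') hkP
      have hmem : (⟨P, hP⟩ : SpecType G) ∈ {P : SpecType G | polar g' ⊆ P.1} := hsubP
      rw [hcl'] at hmem
      exact hkP' (hmem hk)
    have hpol : polar g = polar h := subset_antisymm (hp h g hcl.symm) (hp g h hcl)
    have hbi : biPolar g = biPolar h := by unfold biPolar; rw [hpol]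
    have hdg : biPolar g ⊆ principalCLS g :=
      (hM (principalCLS g) (principalCLS_isConvex g)).2 g (mem_principalCLS_self g)
    have hdh : biPolar h ⊆ principalCLS h :=
      (hM (principalCLS h) (principalCLS_isConvex h)).2 h (mem_principalCLS_self h)
    have h_in : h ∈ principalCLS g := hdg (hbi.symm ▸ hmem_bi h)
    have g_in : g ∈ principalCLS h := hdh (hbi ▸ hmem_bi g)
    ext P
    constructor
    · intro hP hhP
      exact hP (principalCLS_subset P.2.1 hhP g_in)
    · intro hP hgP
      exact hP (principalCLS_subset P.2.1 hgP h_in)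
  · intro hinj H hH
    refine ⟨hH, ?_⟩
    intro h hh k hk
    have hm0 : (0 : G) ≤ labs h + labs k := add_nonneg (labs_nonneg h) (labs_nonneg k)
    have hpol : polar (labs h + labs k) = polar h := by
      apply subset_antisymm
      · intro x hx
        have hx' : labs x ⊓ (labs h + labs k) = 0 := by
          rwa [polar, Set.mem_setOf_eq, labs_of_nonneg hm0] at hx
        have h1 : labs x ⊓ labs h ≤ labs x ⊓ (labs h + labs k) :=
          inf_le_inf_left _ (le_add_of_nonneg_right (labs_nonneg k))
        exact le_antisymm (hx' ▸ h1) (le_inf (labs_nonneg x) (labs_nonneg h))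
      · intro x hx
        have hx1 : labs x ⊓ labs h = 0 := hx
        have hx2 : labs k ⊓ labs x = 0 := hk x hx
        have h1 : labs x ⊓ (labs h + labs k) ≤ (labs x ⊓ labs h) + (labs x ⊓ labs k) :=
          inf_add_le_riesz (labs_nonneg x) (labs_nonneg h) (labs_nonneg k)
        rw [hx1, inf_comm (labs x) (labs k), hx2, add_zero] at h1
        show labs x ⊓ labs (labs h + labs k) = 0
        rw [labs_of_nonneg hm0]
        exact le_antisymm h1 (le_inf (labs_nonneg x) hm0)
    have hkey : Uset (labs h + labs k) = Uset h := by
      apply hinj _ _ (isCompact_Uset _) (isOpen_Uset _) (isCompact_Uset _) (isOpen_Uset _)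
      rw [hk_closure, hk_closure, hpol]
    apply mem_of_forall_prime hH
    intro P hP hHP
    have hhp : h ∈ P := hHP hh
    have : (⟨P, hP⟩ : SpecType G) ∉ Uset h := fun hc => hc hhp
    rw [← hkey] at this
    have hsum : labs h + labs k ∈ P := not_not.1 this
    have hlk : labs k ∈ P :=
      mem_of_nonneg_le hP.1 (labs_nonneg k) (le_add_of_nonneg_left (labs_nonneg h)) hsum
    exact (labs_mem_iff hP.1).1 hlk
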